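/- arXiv:2502.07653 — 6 statements merged into one kernel-verified Lean document; each statement's English description precedes it below -/
import Mathlib

section
/- Let G be a tournament on n vertices that is B-imperfect with respect to a total order π, with |B| = b. Suppose one repeatedly removes vertex-disjoint directed triangles until the remaining graph is acyclic, removing t triangles in total. Then t ≤ b, and the resulting topological ordering ρ of the remaining vertices (which is consistent with π on good vertices) satisfies lcs(π, ρ') ≥ n − 3b, where ρ' is ρ extended arbitrarily to all of V. -/
/-!
A directed triangle cannot lie entirely outside `B`, since there the arcs follow the linear
order `π`; so each of the `t` disjoint triangles uses its own vertex of `B`, giving `t ≤ b`.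
On the good vertices the topological order `ρ` agrees with `π`, so these vertices, listed in
the order of `ρ`, form a common subsequence of `π` and `ρ'`. Of the `n - 3t` vertices of `ρ`
at most `b - t` are bad, so this subsequence has length at least `n - 2t - b ≥ n - 3b`.
-/

theorem List.length_le_countP_flatMap {α β : Type*} (p : β → Bool) (f : α → List β)
    (l : List α) (h : ∀ a ∈ l, ∃ x ∈ f a, p x) :
    l.length ≤ (l.flatMap f).countP p := by
  rw [List.countP_flatMap, ← List.length_map (f := List.countP p ∘ f)]
  refine List.length_le_sum_of_one_le _ fun k hk => ?_
  obtain ⟨a, ha, rfl⟩ := List.mem_map.mp hk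
  obtain ⟨x, hx, hpx⟩ := h a ha
  exact List.countP_pos_iff.mpr ⟨x, hx, hpx⟩

theorem List.Nodup.countP_mem_le_card {α : Type*} [DecidableEq α] {l : List α}
    (hl : l.Nodup) (s : Finset α) : l.countP (· ∈ s) ≤ s.card := by
  rw [List.countP_eq_length_filter, ← List.toFinset_card_of_nodup (hl.filter _)]
  exact Finset.card_le_card fun x hx => by simp_all

theorem List.Nodup.length_eq_card {α : Type*} [Fintype α] [DecidableEq α] {l : List α}
    (hl : l.Nodup) (hall : ∀ x, x ∈ l) : l.length = Fintype.card α := by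
  rw [← List.toFinset_card_of_nodup hl, ← Finset.card_univ]
  exact congrArg Finset.card (Finset.eq_univ_of_forall fun x => List.mem_toFinset.mpr (hall x))

theorem List.length_flatMap_triples {α : Type*} (T : List (α × α × α)) :
    (T.flatMap fun tr => [tr.1, tr.2.1, tr.2.2]).length = 3 * T.length := by
  induction T with
  | nil => rfl
  | cons _ T ih => simp [ih]; ring

section Imperfect

variable {V : Type*} [LinearOrder V] {E : V → V → Prop} {s : Set V}

theorem mem_or_mem_or_mem_of_triangle (hirr : ∀ v, ¬ E v v)
    (himp : ∀ u v, u ≠ v → u ∉ s → v ∉ s → (E u v ↔ u < v))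
    {x y z : V} (hxy : E x y) (hyz : E y z) (hzx : E z x) : x ∈ s ∨ y ∈ s ∨ z ∈ s := by
  by_contra! ⟨hx, hy, hz⟩
  have ne {u v : V} (h : E u v) : u ≠ v := by rintro rfl; exact hirr u h
  have hxy' := (himp x y (ne hxy) hx hy).mp hxy
  have hyz' := (himp y z (ne hyz) hy hz).mp hyz
  have hzx' := (himp z x (ne hzx) hz hx).mp hzx
  exact lt_asymm (hxy'.trans hyz') hzx'

theorem pairwise_lt_filter_notMem_of_pairwise_not_flip [DecidablePred (· ∈ s)]
    (himp : ∀ u v, u ≠ v → u ∉ s → v ∉ s → (E u v ↔ u < v))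
    {ρ : List V} (hnd : ρ.Nodup) (htopo : ρ.Pairwise fun a c => ¬ E c a) :
    (ρ.filter (· ∉ s)).Pairwise (· < ·) := by
  refine List.pairwise_filter.mpr ((htopo.and hnd).imp fun ⟨hE, hne⟩ ha hc => ?_)
  simp only [decide_eq_true_eq] at ha hc
  exact lt_of_le_of_ne (not_lt.mp fun h => hE ((himp _ _ hne.symm hc ha).mpr h)) hne

end Imperfect

theorem stmt_2_general {V : Type*} [Fintype V] [DecidableEq V] [LinearOrder V]
    (E : V → V → Prop) (n b : ℕ) (hn : Fintype.card V = n)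
    (hirr : ∀ v : V, ¬ E v v)
    (B : Finset V) (hb : B.card = b)
    (himp : ∀ u v : V, u ≠ v → u ∉ B → v ∉ B → (E u v ↔ u < v))
    -- π as the sorted list of all vertices
    (πL : List V) (hπsort : πL.Pairwise (· < ·)) (hπmem : ∀ v : V, v ∈ πL)
    -- the removed triangles
    (T : List (V × V × V)) (t : ℕ) (ht : T.length = t)
    (htri : ∀ tr ∈ T, E tr.1 tr.2.1 ∧ E tr.2.1 tr.2.2 ∧ E tr.2.2 tr.1)
    (hdisj : (T.flatMap fun tr => [tr.1, tr.2.1, tr.2.2]).Nodup)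
    -- ρ : a topological ordering of the remaining vertices
    (ρ : List V) (hρnd : ρ.Nodup)
    (hρmem : ∀ v : V, v ∈ ρ ↔ v ∉ (T.flatMap fun tr => [tr.1, tr.2.1, tr.2.2]))
    (hρtopo : ∀ (i j : ℕ) (hi : i < ρ.length) (hj : j < ρ.length),
      i < j → ¬ E (ρ.get ⟨j, hj⟩) (ρ.get ⟨i, hi⟩))
    -- ρ' : an arbitrary extension of ρ to all of V
    (ρ' : List V)
    (hext : ρ.Sublist ρ') :
    t ≤ b ∧ ∃ l : List V, l.Sublist πL ∧ l.Sublist ρ' ∧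
      (n : ℤ) - 3 * b ≤ (l.length : ℤ) := by
  set R := T.flatMap fun tr => [tr.1, tr.2.1, tr.2.2]
  have hRB : t ≤ R.countP (· ∈ B) :=
    ht ▸ List.length_le_countP_flatMap _ _ T fun tr htr => by
      obtain ⟨h₁, h₂, h₃⟩ := htri tr htr
      simpa using mem_or_mem_or_mem_of_triangle (s := ↑B) hirr himp h₁ h₂ h₃
  have hρR : (ρ ++ R).Nodup :=
    List.nodup_append.mpr ⟨hρnd, hdisj, fun a ha _ hc hac => (hρmem a).mp ha (hac ▸ hc)⟩
  have hlen : ρ.length + 3 * t = n := by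
    rw [← ht, ← List.length_flatMap_triples, ← List.length_append, ← hn]
    exact hρR.length_eq_card fun v =>
      List.mem_append.mpr <| (em (v ∈ R)).symm.imp_left (hρmem v).mpr
  have hbad : ρ.countP (· ∈ B) + R.countP (· ∈ B) ≤ b := by
    simpa [hb] using hρR.countP_mem_le_card B
  have hsplit : ρ.length = ρ.countP (· ∈ B) + ρ.countP (· ∉ B) := by
    simpa using List.length_eq_countP_add_countP (· ∈ B) (l := ρ)
  have hsorted : (ρ.filter (· ∉ B)).Pairwise (· < ·) :=
    pairwise_lt_filter_notMem_of_pairwise_not_flip (s := ↑B) himp hρnd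
      (List.pairwise_iff_getElem.mpr fun i j hi hj => hρtopo i j hi hj)
  have hsub : (ρ.filter (· ∉ B)).Sublist πL :=
    List.sublist_of_subperm_of_pairwise
      (List.subperm_of_subset (hρnd.filter _) fun x _ => hπmem x) hsorted hπsort
  refine ⟨by omega, _, hsub, List.filter_sublist.trans hext, ?_⟩
  rw [← List.countP_eq_length_filter]
  omega

/-- Removing `t` vertex-disjoint directed triangles from a `B`-imperfect tournament until
the remainder is acyclic yields `t ≤ b`, and any topological order of the remainder,
extended arbitrarily to all of `V`, has a common subsequence with `π` of length `≥ n - 3b`. -/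
theorem stmt_2 {V : Type*} [Fintype V] [DecidableEq V] [LinearOrder V]
    (E : V → V → Prop) (n b : ℕ) (hn : Fintype.card V = n)
    (hirr : ∀ v : V, ¬ E v v)
    (htour : ∀ u v : V, u ≠ v → (E u v ↔ ¬ E v u))
    (B : Finset V) (hb : B.card = b)
    (himp : ∀ u v : V, u ≠ v → u ∉ B → v ∉ B → (E u v ↔ u < v))
    -- π as the sorted list of all vertices
    (πL : List V) (hπsort : πL.Pairwise (· < ·)) (hπmem : ∀ v : V, v ∈ πL)
    -- the removed triangles
    (T : List (V × V × V)) (t : ℕ) (ht : T.length = t)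
    (htri : ∀ tr ∈ T, E tr.1 tr.2.1 ∧ E tr.2.1 tr.2.2 ∧ E tr.2.2 tr.1)
    (hdisj : (T.flatMap fun tr => [tr.1, tr.2.1, tr.2.2]).Nodup)
    -- the remaining graph is acyclic
    (hacyc : ¬ ∃ v : V, Relation.TransGen
        (fun a c => a ∉ (T.flatMap fun tr => [tr.1, tr.2.1, tr.2.2]) ∧
                    c ∉ (T.flatMap fun tr => [tr.1, tr.2.1, tr.2.2]) ∧ E a c) v v)
    -- ρ : a topological ordering of the remaining vertices
    (ρ : List V) (hρnd : ρ.Nodup)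
    (hρmem : ∀ v : V, v ∈ ρ ↔ v ∉ (T.flatMap fun tr => [tr.1, tr.2.1, tr.2.2]))
    (hρtopo : ∀ (i j : ℕ) (hi : i < ρ.length) (hj : j < ρ.length),
      i < j → ¬ E (ρ.get ⟨j, hj⟩) (ρ.get ⟨i, hi⟩))
    -- ρ' : an arbitrary extension of ρ to all of V
    (ρ' : List V) (hρ'nd : ρ'.Nodup) (hρ'mem : ∀ v : V, v ∈ ρ')
    (hext : ρ.Sublist ρ') :
    t ≤ b ∧ ∃ l : List V, l.Sublist πL ∧ l.Sublist ρ' ∧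
      (n : ℤ) - 3 * b ≤ (l.length : ℤ) :=
  stmt_2_general E n b hn hirr B hb himp πL hπsort hπmem T t ht htri hdisj ρ hρnd hρmem hρtopo ρ'
    hext
end

section
/- Let G be a tournament on vertex set V, B-imperfect with respect to a total order π. If B' ⊆ V is a feedback vertex set of G with |B'| ≤ α|B|, and π₁ is a topological ordering of the acyclic tournament G[V \ B'], then the ordering π̃ obtained by prepending an arbitrary ordering of B' to π₁ satisfies lcs(π, π̃) ≥ |V| − (α+1)|B|. -/
/-!
The vertices of `π₁` outside `B` already appear in the order `π`: arcs between them agree with `π`,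
and `π₁` is a topological order. They form a common subsequence of `π` and `π̃` of length at least
`|V| - |B'| - |B| ≥ |V| - (α + 1)|B|`.
-/

section

variable {V : Type*}

lemma length_add_card_eq_card_of_mem_iff_notMem [Fintype V] [DecidableEq V] {l : List V}
    {B : Finset V} (hl : l.Nodup) (hmem : ∀ v, v ∈ l ↔ v ∉ B) :
    l.length + B.card = Fintype.card V := by
  have hcompl : l.toFinset = Bᶜ := by
    ext v
    simp [hmem v]
  rw [← List.toFinset_card_of_nodup hl, hcompl, add_comm, Finset.card_add_card_compl]

lemma length_le_length_filter_notMem_add_card [DecidableEq V] {l : List V} (hl : l.Nodup)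
    (B : Finset V) : l.length ≤ (l.filter (· ∉ B)).length + B.card := by
  have hsplit := List.length_eq_length_filter_add (l := l) (fun v => decide (v ∉ B))
  have hinB : (l.filter fun v => !decide (v ∉ B)).length ≤ B.card := by
    rw [← List.toFinset_card_of_nodup (hl.filter _)]
    exact Finset.card_le_card fun x hx => (by simpa using hx : x ∈ l ∧ x ∈ B).2
  omega

lemma pairwise_lt_of_pairwise_not_rev [LinearOrder V] {E : V → V → Prop} {B : Finset V}
    (htour : ∀ u v : V, u ≠ v → (E u v ↔ ¬ E v u))
    (himp : ∀ u v : V, u ≠ v → u ∉ B → v ∉ B → (E u v ↔ u < v))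
    {l : List V} (hl : l.Nodup) (hpw : l.Pairwise fun a b => ¬ E b a) (hB : ∀ v ∈ l, v ∉ B) :
    l.Pairwise (· < ·) :=
  (hl.and hpw).imp_of_mem fun ha hb ⟨hne, hba⟩ =>
    (himp _ _ hne (hB _ ha) (hB _ hb)).1 ((htour _ _ hne).2 hba)

end

theorem stmt_3_general {V : Type*} [Fintype V] [LinearOrder V]
    (E : V → V → Prop) (B B' : Finset V) (α : ℝ)
    (htour : ∀ u v : V, u ≠ v → (E u v ↔ ¬ E v u))
    (himp : ∀ u v : V, u ≠ v → u ∉ B → v ∉ B → (E u v ↔ u < v))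
    (hcard : (B'.card : ℝ) ≤ α * (B.card : ℝ))
    -- π₁ : a topological ordering of the vertices outside B'
    (π₁ : List V) (hnd : π₁.Nodup) (hmem : ∀ v : V, v ∈ π₁ ↔ v ∉ B')
    (htopo : ∀ (i j : ℕ) (hi : i < π₁.length) (hj : j < π₁.length),
      i < j → ¬ E (π₁.get ⟨j, hj⟩) (π₁.get ⟨i, hi⟩))
    -- an arbitrary ordering of B'
    (lB : List V)
    -- π as the sorted list of all vertices
    (πL : List V) (hπsort : πL.Pairwise (· < ·)) (hπmem : ∀ v : V, v ∈ πL) :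
    ∃ l : List V, l.Sublist πL ∧ l.Sublist (lB ++ π₁) ∧
      (Fintype.card V : ℝ) - (α + 1) * (B.card : ℝ) ≤ (l.length : ℝ) := by
  have hpw : π₁.Pairwise fun a b => ¬ E b a :=
    List.pairwise_iff_get.2 fun i j hij => htopo i j i.isLt j.isLt hij
  set l := π₁.filter (· ∉ B)
  have hl : l.Sublist π₁ := List.filter_sublist
  have hsorted : l.Pairwise (· < ·) :=
    pairwise_lt_of_pairwise_not_rev htour himp (hnd.sublist hl) (hpw.sublist hl)
      fun v hv => by simpa using (List.mem_filter.1 hv).2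
  refine ⟨l, List.sublist_of_subperm_of_pairwise
      ((hnd.sublist hl).subperm fun v _ => hπmem v) hsorted hπsort,
    hl.trans (List.sublist_append_right lB π₁), ?_⟩
  have hlen : (π₁.length : ℝ) ≤ l.length + B.card := by
    exact_mod_cast length_le_length_filter_notMem_add_card hnd B
  have htotal : (π₁.length : ℝ) + B'.card = Fintype.card V := by
    exact_mod_cast length_add_card_eq_card_of_mem_iff_notMem hnd hmem
  linarith

/-- From an `α`-approximate feedback vertex set `B'` of a `B`-imperfect tournament,
prepending an arbitrary ordering of `B'` to a topological order `π₁` of `G[V \ B']`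
gives an ordering with `lcs ≥ |V| - (α+1)|B|` w.r.t. `π`. -/
theorem stmt_3 {V : Type*} [Fintype V] [DecidableEq V] [LinearOrder V]
    (E : V → V → Prop) (B B' : Finset V) (α : ℝ)
    (hirr : ∀ v : V, ¬ E v v)
    (htour : ∀ u v : V, u ≠ v → (E u v ↔ ¬ E v u))
    (himp : ∀ u v : V, u ≠ v → u ∉ B → v ∉ B → (E u v ↔ u < v))
    -- B' is a feedback vertex set: removing it makes the tournament acyclic
    (hfvs : ¬ ∃ v : V, Relation.TransGen (fun a c => a ∉ B' ∧ c ∉ B' ∧ E a c) v v)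
    (hcard : (B'.card : ℝ) ≤ α * (B.card : ℝ))
    -- π₁ : a topological ordering of the vertices outside B'
    (π₁ : List V) (hnd : π₁.Nodup) (hmem : ∀ v : V, v ∈ π₁ ↔ v ∉ B')
    (htopo : ∀ (i j : ℕ) (hi : i < π₁.length) (hj : j < π₁.length),
      i < j → ¬ E (π₁.get ⟨j, hj⟩) (π₁.get ⟨i, hi⟩))
    -- an arbitrary ordering of B'
    (lB : List V) (hlBnd : lB.Nodup) (hlBmem : ∀ v : V, v ∈ lB ↔ v ∈ B')
    -- π as the sorted list of all vertices
    (πL : List V) (hπsort : πL.Pairwise (· < ·)) (hπmem : ∀ v : V, v ∈ πL) :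
    ∃ l : List V, l.Sublist πL ∧ l.Sublist (lB ++ π₁) ∧
      (Fintype.card V : ℝ) - (α + 1) * (B.card : ℝ) ≤ (l.length : ℝ) :=
  stmt_3_general E B B' α htour himp hcard π₁ hnd hmem htopo lB πL hπsort hπmem
end

section
/- Let G be a tournament on a set S of n elements, B-imperfect with respect to a total order π. Fix a pivot p ∈ S and let L = {s ∈ S \ {p} : (s,p) ∈ E} and R = {s ∈ S \ {p} : (p,s) ∈ E}. Let X be a sequence of distinct good elements of L that is increasing in π, and Y a sequence of distinct good elements of R that is increasing in π, and suppose M := |X| + |Y| − lcs(π_g, XY) > 0, where XY is the concatenation. Then the last ⌈M/2⌉ elements of X and the first ⌈M/2⌉ elements of Y pairwise form directed triangles with p; in particular, the number of directed triangles of G containing p is at least M²/4. -/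
/-!
If `x` is among the last `⌈M/2⌉` elements of `X`, `y` among the first `⌈M/2⌉` of `Y` and
`x < y`, then the prefix of `X` up to `x` followed by the suffix of `Y` from `y` is an increasing
subsequence of `X ++ Y` that drops fewer than `M` elements, which `hM` forbids. Hence `y < x`, so
`(y, x)` is an arc and `(x, p, y)` is a directed triangle; these `⌈M/2⌉²` pairs are distinct.
-/

theorem List.Pairwise.append_singleton_append_cons {α : Type*} [Preorder α] {s t u w : List α}
    {x y : α} (hX : (s ++ x :: t).Pairwise (· < ·)) (hY : (u ++ y :: w).Pairwise (· < ·))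
    (hxy : x < y) : (s ++ [x] ++ y :: w).Pairwise (· < ·) := by
  have hs : ∀ a ∈ s ++ [x], a ≤ x := by
    simp only [List.pairwise_append, List.pairwise_cons] at hX
    simp only [List.mem_append, List.mem_singleton]
    rintro a (ha | rfl)
    exacts [(hX.2.2 a ha x List.mem_cons_self).le, le_rfl]
  have hw : ∀ b ∈ y :: w, y ≤ b := by
    have := List.pairwise_cons.mp (hY.sublist (List.sublist_append_right u _))
    rintro b (_ | ⟨_, hb⟩)
    exacts [le_rfl, (this.1 b hb).le]
  refine List.pairwise_append.mpr ⟨hX.sublist ?_, hY.sublist (List.sublist_append_right u _),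
    fun a ha b hb => (hs a ha).trans_lt (hxy.trans_le (hw b hb))⟩
  simp

theorem le_length_add_length_of_lt {α : Type*} [Preorder α] {X Y : List α} {M : ℕ}
    (hM : ∀ l : List α, l.Sublist (X ++ Y) → l.Pairwise (· < ·) →
      l.length + M ≤ X.length + Y.length)
    (hX : X.Pairwise (· < ·)) (hY : Y.Pairwise (· < ·))
    {s t u w : List α} {x y : α} (hXe : X = s ++ x :: t) (hYe : Y = u ++ y :: w) (hxy : x < y) :
    M ≤ t.length + u.length := by
  subst hXe hYe
  have hsub : (s ++ [x] ++ y :: w).Sublist (s ++ x :: t ++ (u ++ y :: w)) :=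
    (by simp : (s ++ [x]).Sublist (s ++ x :: t)).append (List.sublist_append_right u _)
  have := hM _ hsub (hX.append_singleton_append_cons hY hxy)
  simp only [List.length_append, List.length_cons] at this
  omega

theorem not_lt_of_mem_drop_of_mem_take {α : Type*} [Preorder α] {X Y : List α} {M a b : ℕ}
    (hM : ∀ l : List α, l.Sublist (X ++ Y) → l.Pairwise (· < ·) →
      l.length + M ≤ X.length + Y.length)
    (hX : X.Pairwise (· < ·)) (hY : Y.Pairwise (· < ·)) (hab : a + b ≤ M + 1)
    {x y : α} (hx : x ∈ X.drop (X.length - a)) (hy : y ∈ Y.take b) : ¬ x < y := by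
  intro hxy
  obtain ⟨s, t, hst⟩ := List.append_of_mem hx
  obtain ⟨u, w, huw⟩ := List.append_of_mem hy
  have hXe : X = (X.take (X.length - a) ++ s) ++ x :: t := by
    rw [List.append_assoc, ← hst, List.take_append_drop]
  have hYe : Y = u ++ y :: (w ++ Y.drop b) := by
    rw [← List.cons_append, ← List.append_assoc, ← huw, List.take_append_drop]
  have hdef := le_length_add_length_of_lt hM hX hY hXe hYe hxy
  have ht : t.length < a := by
    have := congrArg List.length hst
    simp only [List.length_drop, List.length_append, List.length_cons] at this
    omega
  have hu : u.length < b := by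
    have := congrArg List.length huw
    simp only [List.length_take, List.length_append, List.length_cons] at this
    omega
  omega

theorem List.Nodup.ncard_setOf_mem {α : Type*} {l : List α} (h : l.Nodup) :
    {a | a ∈ l}.ncard = l.length := by
  classical
  rw [← List.coe_toFinset, Set.ncard_coe_finset, List.toFinset_card_of_nodup h]

theorem sq_half_le_sq_ceil_half (M : ℕ) : ((M : ℝ) / 2) ^ 2 ≤ (((M + 1) / 2 : ℕ) : ℝ) ^ 2 := by
  have : (M : ℝ) ≤ 2 * ((M + 1) / 2 : ℕ) := by exact_mod_cast (by omega : M ≤ 2 * ((M + 1) / 2))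
  gcongr
  linarith

theorem stmt_4_general {V : Type*} [Fintype V] [LinearOrder V]
    (E : V → V → Prop) (B : Finset V)
    (htour : ∀ u v : V, u ≠ v → (E u v ↔ ¬ E v u))
    (himp : ∀ u v : V, u ≠ v → u ∉ B → v ∉ B → (E u v ↔ u < v))
    (p : V) (X Y : List V) (M : ℕ)
    (hX : ∀ x ∈ X, x ≠ p ∧ E x p ∧ x ∉ B)
    (hY : ∀ y ∈ Y, y ≠ p ∧ E p y ∧ y ∉ B)
    (hXsort : X.Pairwise (· < ·)) (hYsort : Y.Pairwise (· < ·))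
    -- every subsequence of X ++ Y increasing in π has length ≤ |X| + |Y| - M
    (hM : ∀ l : List V, l.Sublist (X ++ Y) → l.Pairwise (· < ·) →
      l.length + M ≤ X.length + Y.length) :
    (∀ x ∈ X.drop (X.length - (M + 1) / 2), ∀ y ∈ Y.take ((M + 1) / 2),
      E x p ∧ E p y ∧ E y x) ∧
    (M : ℝ) ^ 2 / 4 ≤
      (({q : V × V | E q.1 p ∧ E p q.2 ∧ E q.2 q.1} : Set (V × V)).ncard : ℝ) := by
  set k := (M + 1) / 2
  have htri : ∀ x ∈ X.drop (X.length - k), ∀ y ∈ Y.take k, E x p ∧ E p y ∧ E y x := by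
    intro x hx y hy
    obtain ⟨hxp, hExp, hxB⟩ := hX x (List.mem_of_mem_drop hx)
    obtain ⟨-, hEpy, hyB⟩ := hY y (List.mem_of_mem_take hy)
    have hxy : x ≠ y := by
      rintro rfl
      exact (htour x p hxp).mp hExp hEpy
    have hyx : y < x := (not_lt.mp (not_lt_of_mem_drop_of_mem_take hM hXsort hYsort
      (by omega) hx hy)).lt_of_ne hxy.symm
    exact ⟨hExp, hEpy, (himp y x hxy.symm hyB hxB).mpr hyx⟩
  refine ⟨htri, ?_⟩
  have hXk : k ≤ X.length := by
    have := hM Y (List.sublist_append_right X Y) hYsort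
    omega
  have hYk : k ≤ Y.length := by
    have := hM X (List.sublist_append_left X Y) hXsort
    omega
  have hcard : ({a | a ∈ X.drop (X.length - k)} ×ˢ {b | b ∈ Y.take k}).ncard = k * k := by
    rw [Set.ncard_prod, (hXsort.sublist (List.drop_sublist _ _)).nodup.ncard_setOf_mem,
      (hYsort.sublist (List.take_sublist _ _)).nodup.ncard_setOf_mem,
      List.length_drop, List.length_take, Nat.sub_sub_self hXk, min_eq_left hYk]
  calc (M : ℝ) ^ 2 / 4 = ((M : ℝ) / 2) ^ 2 := by ring
    _ ≤ (k : ℝ) ^ 2 := sq_half_le_sq_ceil_half M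
    _ = (({a | a ∈ X.drop (X.length - k)} ×ˢ {b | b ∈ Y.take k}).ncard : ℝ) := by
      rw [hcard]; push_cast; ring
    _ ≤ _ := by
      gcongr
      · exact Set.toFinite _
      · rintro ⟨a, b⟩ ⟨ha, hb⟩
        exact htri a ha b hb

/-- If `X` (in `L`) and `Y` (in `R`) are sorted sequences of distinct good elements whose
concatenation loses at least `M > 0` w.r.t. the underlying order, then every element among
the last `⌈M/2⌉` of `X` and every element among the first `⌈M/2⌉` of `Y` forms a directed
triangle with the pivot `p`; in particular at least `M²/4` directed triangles contain `p`. -/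
theorem stmt_4 {V : Type*} [Fintype V] [DecidableEq V] [LinearOrder V]
    (E : V → V → Prop) (B : Finset V)
    (htour : ∀ u v : V, u ≠ v → (E u v ↔ ¬ E v u))
    (himp : ∀ u v : V, u ≠ v → u ∉ B → v ∉ B → (E u v ↔ u < v))
    (p : V) (X Y : List V) (M : ℕ)
    (hX : ∀ x ∈ X, x ≠ p ∧ E x p ∧ x ∉ B)
    (hY : ∀ y ∈ Y, y ≠ p ∧ E p y ∧ y ∉ B)
    (hXnd : X.Nodup) (hYnd : Y.Nodup)
    (hXsort : X.Pairwise (· < ·)) (hYsort : Y.Pairwise (· < ·))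
    -- every subsequence of X ++ Y increasing in π has length ≤ |X| + |Y| - M
    (hM : ∀ l : List V, l.Sublist (X ++ Y) → l.Pairwise (· < ·) →
      l.length + M ≤ X.length + Y.length)
    (hMpos : 0 < M) :
    (∀ x ∈ X.drop (X.length - (M + 1) / 2), ∀ y ∈ Y.take ((M + 1) / 2),
      E x p ∧ E p y ∧ E y x) ∧
    (M : ℝ) ^ 2 / 4 ≤
      (({q : V × V | E q.1 p ∧ E p q.2 ∧ E q.2 q.1} : Set (V × V)).ncard : ℝ) :=
  stmt_4_general E B htour himp p X Y M hX hY hXsort hYsort hM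
end

section
/- Let S be a multiset of n permutations of [d] with optimal 1-median σ* and OPT = Σ_{x∈S} |I_x| where I_x is the misaligned symbol set of x (so Δ(x, σ*) = |I_x|). Let F̄ = {x ∈ S : (1−α)OPT/n ≤ |I_x| ≤ (1+α)OPT/n} and fix x_j ∈ F̄. Let R = {x_i ∈ F̄ : |I_{x_i} ∩ I_{x_j}| > ε|I_{x_j}|}. Then Σ_{x_i ∈ R} Δ(x_i, x_j) ≤ (2 − ε(1 + 3α − 3α/ε)) · Σ_{x_i ∈ R} Δ(x_i, σ*), provided 0 < α ≤ 1/3. -/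
/-!
Each `x` agrees with `σ*` once the symbols of `I_x` are deleted, so `x` and `x_j` share the
common subsequence `σ*` minus `I_x ∪ I_{x_j}`, whence
`Δ(x, x_j) ≤ |I_x| + |I_{x_j}| - |I_x ∩ I_{x_j}|`.
For `x ∈ R` the overlap exceeds `ε |I_{x_j}|`, and in the band `F̄` one has
`|I_{x_j}| ≤ (1 + α)/(1 - α) · |I_x| ≤ (1 + 3α) |I_x|`, so
`Δ(x, x_j) ≤ (1 + (1 - ε)(1 + 3α)) |I_x|`; summing over `R` gives the claim.
-/

/-- Length of the longest common subsequence of `x` and `y`. -/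
def lcsLen {α : Type*} [DecidableEq α] (x y : List α) : ℕ :=
  (((x.sublists.filter fun l => decide (l.Sublist y)).map List.length).foldr max 0)

section Ulam

variable {α : Type*} [DecidableEq α]

theorem le_lcsLen {x y l : List α} (hx : l.Sublist x) (hy : l.Sublist y) :
    l.length ≤ lcsLen x y :=
  List.le_max_of_le' 0 (List.mem_map_of_mem (List.mem_filter.mpr
    ⟨List.mem_sublists.mpr hx, decide_eq_true hy⟩)) le_rfl

theorem List.filter_notMem_union_sublist {x σ : List α} {U V : Finset α}
    (h : x.filter (fun a => decide (a ∉ U)) = σ.filter (fun a => decide (a ∉ U))) :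
    (σ.filter fun a => decide (a ∉ U ∪ V)).Sublist x := by
  have : (σ.filter fun a => decide (a ∉ U ∪ V)) =
      (x.filter fun a => decide (a ∉ U)).filter fun a => decide (a ∉ V) := by
    rw [h, List.filter_filter]
    refine List.filter_congr fun a _ => ?_
    simp only [Finset.mem_union, not_or, Bool.decide_and, Bool.and_comm]
  exact this ▸ List.filter_sublist.trans List.filter_sublist

variable [Fintype α]

theorem List.length_filter_notMem_of_nodup {σ : List α} (hnd : σ.Nodup)
    (hlen : σ.length = Fintype.card α) (U : Finset α) :
    (σ.filter fun a => decide (a ∉ U)).length = Fintype.card α - U.card := by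
  have hσ : σ.toFinset = Finset.univ :=
    Finset.eq_univ_of_card _ (by rw [List.toFinset_card_of_nodup hnd, hlen])
  have hfilter : (σ.filter fun a => decide (a ∉ U)).toFinset = Uᶜ := by
    rw [List.toFinset_filter, hσ]
    ext a
    simp
  rw [← List.toFinset_card_of_nodup (hnd.filter _), hfilter, Finset.card_compl]

theorem ulamDist_le_card_union {σ x y : List α} (hnd : σ.Nodup)
    (hlen : σ.length = Fintype.card α) {U V : Finset α}
    (hx : x.filter (fun a => decide (a ∉ U)) = σ.filter (fun a => decide (a ∉ U)))
    (hy : y.filter (fun a => decide (a ∉ V)) = σ.filter (fun a => decide (a ∉ V))) :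
    Fintype.card α - lcsLen x y ≤ (U ∪ V).card := by
  have hcommon := le_lcsLen (List.filter_notMem_union_sublist (V := V) hx)
    (Finset.union_comm U V ▸ List.filter_notMem_union_sublist (V := U) hy)
  rw [List.length_filter_notMem_of_nodup hnd hlen] at hcommon
  omega

end Ulam

theorem le_one_add_three_mul_of_mem_band {α M a b : ℝ} (hα0 : 0 ≤ α) (hα1 : α ≤ 1 / 3)
    (hb0 : 0 ≤ b) (ha : (1 - α) * M ≤ a) (hb : b ≤ (1 + α) * M) :
    b ≤ (1 + 3 * α) * a := by
  have hM : 0 ≤ M := nonneg_of_mul_nonneg_right (hb0.trans hb) (by linarith)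
  nlinarith [mul_nonneg (mul_nonneg hα0 (by linarith : (0 : ℝ) ≤ 1 - 3 * α)) hM]

theorem le_of_le_add_sub_of_large_inter {α ε δ a b c : ℝ} (hε : 0 < ε)
    (hδ : δ ≤ a + b - c) (hc0 : 0 ≤ c) (hc : ε * b < c) (hcb : c ≤ b)
    (hba : b ≤ (1 + 3 * α) * a) :
    δ ≤ (2 - ε * (1 + 3 * α - 3 * α / ε)) * a := by
  have hε1 : ε ≤ 1 := by nlinarith
  have hcoef : ε * (1 + 3 * α - 3 * α / ε) = ε + 3 * α * ε - 3 * α := by field_simp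
  rw [hcoef]
  nlinarith [mul_le_mul_of_nonneg_left hba (sub_nonneg.mpr hε1)]

open scoped Classical in
theorem stmt_14_general (d : ℕ) (S : Multiset (List (Fin d))) (σs : List (Fin d))
    (hsnd : σs.Nodup) (hsl : σs.length = d)
    (Ix : List (Fin d) → Finset (Fin d))
    -- removing the symbols of `Ix x` aligns `x` with `σ*`
    (halign : ∀ x ∈ S,
      x.filter (fun a => decide (a ∉ Ix x)) = σs.filter (fun a => decide (a ∉ Ix x)))
    (α ε : ℝ) (hα0 : 0 < α) (hα1 : α ≤ 1 / 3) (hε : 0 < ε)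
    (xj : List (Fin d))
    -- `x_j` belongs to the middle band `F̄`
    (hxj : xj ∈ S.filter fun x =>
      (1 - α) * ((S.map fun y => ((Ix y).card : ℝ)).sum / (Multiset.card S : ℝ)) ≤
          ((Ix x).card : ℝ) ∧
        ((Ix x).card : ℝ) ≤
          (1 + α) * ((S.map fun y => ((Ix y).card : ℝ)).sum / (Multiset.card S : ℝ))) :
    -- the ball R = B(x_j, ε) inside F̄
    ((((S.filter fun x =>
      (1 - α) * ((S.map fun y => ((Ix y).card : ℝ)).sum / (Multiset.card S : ℝ)) ≤
          ((Ix x).card : ℝ) ∧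
        ((Ix x).card : ℝ) ≤
          (1 + α) * ((S.map fun y => ((Ix y).card : ℝ)).sum / (Multiset.card S : ℝ))).filter
        fun x => ε * ((Ix xj).card : ℝ) < ((Ix x ∩ Ix xj).card : ℝ)).map
          fun x => ((d - lcsLen x xj : ℕ) : ℝ)).sum) ≤
      (2 - ε * (1 + 3 * α - 3 * α / ε)) *
        ((((S.filter fun x =>
          (1 - α) * ((S.map fun y => ((Ix y).card : ℝ)).sum / (Multiset.card S : ℝ)) ≤
              ((Ix x).card : ℝ) ∧
            ((Ix x).card : ℝ) ≤
              (1 + α) * ((S.map fun y => ((Ix y).card : ℝ)).sum / (Multiset.card S : ℝ))).filter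
            fun x => ε * ((Ix xj).card : ℝ) < ((Ix x ∩ Ix xj).card : ℝ)).map
              fun x => (((Ix x).card : ℕ) : ℝ)).sum) := by
  rw [← Multiset.sum_map_mul_left]
  refine Multiset.sum_map_le_sum_map _ _ fun x hx => ?_
  obtain ⟨hxF, hball⟩ := Multiset.mem_filter.mp hx
  obtain ⟨hxS, hx_lo, -⟩ := Multiset.mem_filter.mp hxF
  obtain ⟨hjS, -, hj_hi⟩ := Multiset.mem_filter.mp hxj
  have hulam : ((d - lcsLen x xj : ℕ) : ℝ) ≤ ((Ix x ∪ Ix xj).card : ℝ) := by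
    have := ulamDist_le_card_union hsnd (hsl.trans (Fintype.card_fin d).symm)
      (halign x hxS) (halign xj hjS)
    rw [Fintype.card_fin] at this
    exact_mod_cast this
  have hunion :
      ((Ix x ∪ Ix xj).card : ℝ) + (Ix x ∩ Ix xj).card = (Ix x).card + (Ix xj).card := by
    exact_mod_cast Finset.card_union_add_card_inter (Ix x) (Ix xj)
  have hinter : ((Ix x ∩ Ix xj).card : ℝ) ≤ (Ix xj).card := by
    exact_mod_cast Finset.card_le_card Finset.inter_subset_right
  exact le_of_le_add_sub_of_large_inter hε (by linarith) (Nat.cast_nonneg _) hball hinter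
    (le_one_add_three_mul_of_mem_band hα0.le hα1 (Nat.cast_nonneg _) hx_lo hj_hi)

open scoped Classical in
/-- Cost bound for a ball `R` around `x_j` in the middle band `F̄` (Ulam metric):
`Σ_{x ∈ R} Δ(x, x_j) ≤ (2 - ε(1 + 3α - 3α/ε)) · Σ_{x ∈ R} Δ(x, σ*)`. -/
theorem stmt_14 (d : ℕ) (S : Multiset (List (Fin d))) (σs : List (Fin d))
    (hperm : ∀ x ∈ S, x.Nodup ∧ x.length = d) (hsnd : σs.Nodup) (hsl : σs.length = d)
    (Ix : List (Fin d) → Finset (Fin d))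
    -- removing the symbols of `Ix x` aligns `x` with `σ*`
    (halign : ∀ x ∈ S,
      x.filter (fun a => decide (a ∉ Ix x)) = σs.filter (fun a => decide (a ∉ Ix x)))
    -- `Δ(x, σ*) = |I_x|`
    (hdist : ∀ x ∈ S, d - lcsLen x σs = (Ix x).card)
    (α ε : ℝ) (hα0 : 0 < α) (hα1 : α ≤ 1 / 3) (hε : 0 < ε)
    (xj : List (Fin d))
    -- `x_j` belongs to the middle band `F̄`
    (hxj : xj ∈ S.filter fun x =>
      (1 - α) * ((S.map fun y => ((Ix y).card : ℝ)).sum / (Multiset.card S : ℝ)) ≤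
          ((Ix x).card : ℝ) ∧
        ((Ix x).card : ℝ) ≤
          (1 + α) * ((S.map fun y => ((Ix y).card : ℝ)).sum / (Multiset.card S : ℝ))) :
    -- the ball R = B(x_j, ε) inside F̄
    ((((S.filter fun x =>
      (1 - α) * ((S.map fun y => ((Ix y).card : ℝ)).sum / (Multiset.card S : ℝ)) ≤
          ((Ix x).card : ℝ) ∧
        ((Ix x).card : ℝ) ≤
          (1 + α) * ((S.map fun y => ((Ix y).card : ℝ)).sum / (Multiset.card S : ℝ))).filter
        fun x => ε * ((Ix xj).card : ℝ) < ((Ix x ∩ Ix xj).card : ℝ)).map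
          fun x => ((d - lcsLen x xj : ℕ) : ℝ)).sum) ≤
      (2 - ε * (1 + 3 * α - 3 * α / ε)) *
        ((((S.filter fun x =>
          (1 - α) * ((S.map fun y => ((Ix y).card : ℝ)).sum / (Multiset.card S : ℝ)) ≤
              ((Ix x).card : ℝ) ∧
            ((Ix x).card : ℝ) ≤
              (1 + α) * ((S.map fun y => ((Ix y).card : ℝ)).sum / (Multiset.card S : ℝ))).filter
            fun x => ε * ((Ix xj).card : ℝ) < ((Ix x ∩ Ix xj).card : ℝ)).map
              fun x => (((Ix x).card : ℕ) : ℝ)).sum) :=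
  stmt_14_general d S σs hsnd hsl Ix halign α ε hα0 hα1 hε xj hxj
end

section
/- Let Δ be a metric, S a finite multiset partitioned into optimal clusters with J-indexed clusters covered by center set C, and suppose (Σ_{l∉J} Δ(S_l, C)) / (Σ_{l∈[k]} Δ(S_l, C)) ≤ ε/2 and Σ_{l∈J} Δ(S_l, C) ≤ (2−δ')·Σ_{l∈J} OPT_l where OPT_l is the optimal cluster cost. Then Δ(S, C) ≤ (2−δ')·(1/(1−ε/2))·Σ_{l∈[k]} OPT_l, and in particular for ε ≤ δ'/10 this is at most (2 − δ'/2)·OPT where OPT = Σ_l OPT_l. -/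
/-- Distance from a point to its nearest center in `C`. -/
noncomputable def ptCost {X : Type*} [MetricSpace X] (p : X) (C : Finset X) : ℝ :=
  sInf ((fun c => dist p c) '' (C : Set X))

/-- Clustering cost of a multiset of points with center set `C`. -/
noncomputable def clCost {X : Type*} [MetricSpace X] (S : Multiset X) (C : Finset X) : ℝ :=
  (S.map fun x => ptCost x C).sum

lemma ptCost_nonneg {X : Type*} [MetricSpace X] (p : X) (C : Finset X) : 0 ≤ ptCost p C := by
  apply Real.sInf_nonneg
  rintro x ⟨c, -, rfl⟩
  exact dist_nonneg

lemma clCost_nonneg {X : Type*} [MetricSpace X] (S : Multiset X) (C : Finset X) :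
    0 ≤ clCost S C := by
  apply Multiset.sum_nonneg
  intro x hx
  obtain ⟨y, -, rfl⟩ := Multiset.mem_map.1 hx
  exact ptCost_nonneg y C

/-- If the uncovered clusters carry at most an `ε/2` fraction of the cost, and the covered
clusters are served within factor `2-δ'`, then the total cost is at most
`(2-δ')/(1-ε/2)` times `OPT`; in particular, at most `(2-δ'/2)·OPT` when `ε ≤ δ'/10`. -/
theorem stmt_15 {X : Type*} [MetricSpace X] (k : ℕ) (Sl : Fin k → Multiset X)
    (cstar : Fin k → X) (C : Finset X) (hC : C.Nonempty) (J : Finset (Fin k))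
    (ε δ' : ℝ) (hε0 : 0 < ε) (hε2 : ε < 2) (hδ0 : 0 < δ') (hδ2 : δ' ≤ 2)
    -- each `cstar l` is an optimal 1-median for its cluster
    (hopt : ∀ l : Fin k, ∀ y : X,
      ((Sl l).map fun x => dist x (cstar l)).sum ≤ ((Sl l).map fun x => dist x y).sum)
    (hratio :
      (∑ l ∈ Finset.univ \ J, clCost (Sl l) C) / (∑ l : Fin k, clCost (Sl l) C) ≤ ε / 2)
    (hcov : ∑ l ∈ J, clCost (Sl l) C ≤
      (2 - δ') * ∑ l ∈ J, ((Sl l).map fun x => dist x (cstar l)).sum) :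
    (∑ l : Fin k, clCost (Sl l) C) ≤
      (2 - δ') * (1 / (1 - ε / 2)) *
        ∑ l : Fin k, ((Sl l).map fun x => dist x (cstar l)).sum ∧
    (ε ≤ δ' / 10 →
      (∑ l : Fin k, clCost (Sl l) C) ≤
        (2 - δ' / 2) * ∑ l : Fin k, ((Sl l).map fun x => dist x (cstar l)).sum) := by
  set T : ℝ := ∑ l : Fin k, clCost (Sl l) C with hT
  set A : ℝ := ∑ l ∈ J, clCost (Sl l) C with hA
  set B : ℝ := ∑ l ∈ Finset.univ \ J, clCost (Sl l) C with hB
  set O : ℝ := ∑ l : Fin k, ((Sl l).map fun x => dist x (cstar l)).sum with hO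
  set OJ : ℝ := ∑ l ∈ J, ((Sl l).map fun x => dist x (cstar l)).sum with hOJ
  have hsplit : B + A = T := by
    rw [hB, hA, hT]
    exact Finset.sum_sdiff (Finset.subset_univ J)
  have hBnn : 0 ≤ B := Finset.sum_nonneg fun l _ => clCost_nonneg _ _
  have hAnn : 0 ≤ A := Finset.sum_nonneg fun l _ => clCost_nonneg _ _
  have hTnn : 0 ≤ T := by linarith
  have hOnn : 0 ≤ O := by
    apply Finset.sum_nonneg
    intro l _
    apply Multiset.sum_nonneg
    intro x hx
    obtain ⟨y, -, rfl⟩ := Multiset.mem_map.1 hx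
    exact dist_nonneg
  have hOJO : OJ ≤ O := by
    apply Finset.sum_le_sum_of_subset_of_nonneg (Finset.subset_univ J)
    intro l _ _
    apply Multiset.sum_nonneg
    intro x hx
    obtain ⟨y, -, rfl⟩ := Multiset.mem_map.1 hx
    exact dist_nonneg
  have hε2' : 0 < 1 - ε / 2 := by linarith
  have hmain : T ≤ (2 - δ') * (1 / (1 - ε / 2)) * O := by
    rcases eq_or_lt_of_le hTnn with h0 | hTpos
    · rw [← h0]
      have h1 : (0:ℝ) ≤ 1 / (1 - ε / 2) := by positivity
      exact mul_nonneg (mul_nonneg (by linarith) h1) hOnn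
    · have hBle : B ≤ ε / 2 * T := by
        rw [div_le_iff₀ hTpos] at hratio
        linarith
      have hAle : A ≤ (2 - δ') * OJ := hcov
      have hAO : A ≤ (2 - δ') * O := by nlinarith
      rw [mul_one_div, div_mul_eq_mul_div, le_div_iff₀ hε2']
      nlinarith
  refine ⟨hmain, fun hεδ => ?_⟩
  have hkey : (2 - δ') * (1 / (1 - ε / 2)) ≤ 2 - δ' / 2 := by
    rw [mul_one_div, div_le_iff₀ hε2']
    nlinarith
  calc T ≤ (2 - δ') * (1 / (1 - ε / 2)) * O := hmain
    _ ≤ (2 - δ' / 2) * O := by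
        apply mul_le_mul_of_nonneg_right hkey hOnn
end

section
/- Let Δ be a metric, S_j a cluster of m points with center x*, C a set of centers, and 0 < ε ≤ 1. Let L = {p ∈ S_j : Δ(p, C) ≤ (ε/2)/m · Δ(S_j, C)}. Then Δ(L, C) ≤ (ε/(1 − ε/2)) · Δ(S_j, x*); in particular, for ε ≤ 1, Δ(L, C) ≤ 2ε · Δ(S_j, x*). -/
section

variable {X : Type*} [MetricSpace X]

noncomputable def sumDist (S : Multiset X) (x : X) : ℝ :=
  (S.map (dist · x)).sum

lemma sumDist_nonneg (S : Multiset X) (x : X) : 0 ≤ sumDist S x :=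
  Multiset.sum_nonneg <| Multiset.forall_mem_map_iff.2 fun _ _ => dist_nonneg

lemma ptCost_le_dist {p c : X} {C : Finset X} (hc : c ∈ C) : ptCost p C ≤ dist p c :=
  csInf_le ((C.finite_toSet.image _).bddBelow) ⟨c, hc, rfl⟩

lemma exists_mem_ptCost_eq (p : X) {C : Finset X} (hC : C.Nonempty) :
    ∃ c ∈ C, ptCost p C = dist p c := by
  obtain ⟨c, hc, hpc⟩ :=
    ((Finset.coe_nonempty.2 hC).image (dist p)).csInf_mem (C.finite_toSet.image (dist p))
  exact ⟨c, hc, hpc.symm⟩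

-- `sInf ∅ = 0`, so an empty `C` costs nothing.
lemma ptCost_le_dist_add_ptCost (p q : X) (C : Finset X) :
    ptCost p C ≤ dist p q + ptCost q C := by
  rcases C.eq_empty_or_nonempty with rfl | hC
  · simp [ptCost]
  obtain ⟨c, hc, hq⟩ := exists_mem_ptCost_eq q hC
  calc ptCost p C ≤ dist p c := ptCost_le_dist hc
    _ ≤ dist p q + dist q c := dist_triangle p q c
    _ = dist p q + ptCost q C := by rw [hq]

lemma clCost_le_sumDist_add (S : Multiset X) (x : X) (C : Finset X) :
    clCost S C ≤ sumDist S x + Multiset.card S * ptCost x C :=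
  calc clCost S C ≤ (S.map fun q => dist q x + ptCost x C).sum :=
        Multiset.sum_map_le_sum_map _ _ fun q _ => ptCost_le_dist_add_ptCost q x C
    _ = sumDist S x + Multiset.card S * ptCost x C := by
        rw [Multiset.sum_map_add, Multiset.map_const', Multiset.sum_replicate, nsmul_eq_mul,
          sumDist]

lemma ptCost_le_of_le_mul_clCost {S : Multiset X} {p : X} (x : X) {C : Finset X} {δ : ℝ}
    (hp : p ∈ S) (hδ0 : 0 ≤ δ) (hδ1 : δ < 1)
    (hpC : ptCost p C ≤ δ / Multiset.card S * clCost S C) :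
    ptCost p C ≤ δ / (1 - δ) * (sumDist S x / Multiset.card S + dist p x) := by
  set m : ℝ := (Multiset.card S : ℝ)
  have hm : 0 < m := Nat.cast_pos.2 (Multiset.card_pos_iff_exists_mem.2 ⟨p, hp⟩)
  have hpm : m * ptCost p C ≤ δ * clCost S C :=
    calc m * ptCost p C ≤ m * (δ / m * clCost S C) := by gcongr
      _ = δ * clCost S C := by field_simp
  have hcost : (1 - δ) * clCost S C ≤ sumDist S x + m * dist p x := by
    have hx := mul_le_mul_of_nonneg_left (ptCost_le_dist_add_ptCost x p C) hm.le
    rw [dist_comm] at hx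
    linarith [clCost_le_sumDist_add S x C]
  calc ptCost p C ≤ δ / m * clCost S C := hpC
    _ = δ / m / (1 - δ) * ((1 - δ) * clCost S C) := by field_simp [(sub_pos.2 hδ1).ne']
    _ ≤ δ / m / (1 - δ) * (sumDist S x + m * dist p x) := by
        gcongr
    _ = δ / (1 - δ) * (sumDist S x / m + dist p x) := by field_simp

lemma clCost_le_of_le_mul_clCost {L S : Multiset X} (x : X) {C : Finset X} {δ : ℝ}
    (hLS : L ≤ S) (hδ0 : 0 ≤ δ) (hδ1 : δ < 1)
    (hL : ∀ p ∈ L, ptCost p C ≤ δ / Multiset.card S * clCost S C) :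
    clCost L C ≤ 2 * δ / (1 - δ) * sumDist S x := by
  set f : X → ℝ := fun p => δ / (1 - δ) * (sumDist S x / Multiset.card S + dist p x)
  have hf : ∀ p, 0 ≤ f p := fun p => by
    have := sub_pos.2 hδ1
    have := sumDist_nonneg S x
    positivity
  have hSf : (S.map f).sum = 2 * δ / (1 - δ) * sumDist S x := by
    rcases S.empty_or_exists_mem with rfl | ⟨p, hp⟩
    · simp [sumDist]
    have hm : (0 : ℝ) < Multiset.card S :=
      Nat.cast_pos.2 (Multiset.card_pos_iff_exists_mem.2 ⟨p, hp⟩)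
    simp only [f, Multiset.sum_map_mul_left, Multiset.sum_map_add, Multiset.map_const',
      Multiset.sum_replicate, nsmul_eq_mul]
    rw [← sumDist]
    field_simp
    ring
  obtain ⟨T, rfl⟩ := Multiset.le_iff_exists_add.mp hLS
  calc clCost L C ≤ (L.map f).sum := Multiset.sum_map_le_sum_map _ _ fun p hp =>
        ptCost_le_of_le_mul_clCost x (Multiset.mem_add.2 (.inl hp)) hδ0 hδ1 (hL p hp)
    _ ≤ ((L + T).map f).sum := by
        rw [Multiset.map_add, Multiset.sum_add]
        exact le_add_of_nonneg_right
          (Multiset.sum_nonneg <| Multiset.forall_mem_map_iff.2 fun q _ => hf q)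
    _ = 2 * δ / (1 - δ) * sumDist (L + T) x := hSf

end

open scoped Classical in
theorem stmt_17_general {X : Type*} [MetricSpace X] (Sj : Multiset X) (xstar : X)
    (C : Finset X) (ε : ℝ) (hε0 : 0 < ε) (hε1 : ε ≤ 1) :
    clCost (Sj.filter fun q =>
        ptCost q C ≤ (ε / 2) / (Multiset.card Sj : ℝ) * clCost Sj C) C ≤
      ε / (1 - ε / 2) * (Sj.map fun q => dist q xstar).sum ∧
    clCost (Sj.filter fun q =>
        ptCost q C ≤ (ε / 2) / (Multiset.card Sj : ℝ) * clCost Sj C) C ≤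
      2 * ε * (Sj.map fun q => dist q xstar).sum := by
  set L := Sj.filter fun q => ptCost q C ≤ (ε / 2) / (Multiset.card Sj : ℝ) * clCost Sj C
  have hL : clCost L C ≤ 2 * (ε / 2) / (1 - ε / 2) * sumDist Sj xstar :=
    clCost_le_of_le_mul_clCost xstar (Multiset.filter_le _ Sj) (by positivity) (by linarith)
      fun p hp => (Multiset.mem_filter.mp hp).2
  rw [mul_div_cancel₀ ε two_ne_zero] at hL
  have hε : ε / (1 - ε / 2) ≤ 2 * ε := by
    rw [div_le_iff₀ (by linarith)]
    nlinarith
  exact ⟨hL, hL.trans (mul_le_mul_of_nonneg_right hε (sumDist_nonneg Sj xstar))⟩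

open scoped Classical in
/-- The points of `S_j` that are very cheap relative to `C` can be served by `C` at a
cost of at most `(ε/(1-ε/2))·Δ(S_j, x*) ≤ 2ε·Δ(S_j, x*)`. -/
theorem stmt_17 {X : Type*} [MetricSpace X] (Sj : Multiset X) (xstar : X)
    (C : Finset X) (hC : C.Nonempty) (ε : ℝ) (hε0 : 0 < ε) (hε1 : ε ≤ 1) :
    clCost (Sj.filter fun q =>
        ptCost q C ≤ (ε / 2) / (Multiset.card Sj : ℝ) * clCost Sj C) C ≤
      ε / (1 - ε / 2) * (Sj.map fun q => dist q xstar).sum ∧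
    clCost (Sj.filter fun q =>
        ptCost q C ≤ (ε / 2) / (Multiset.card Sj : ℝ) * clCost Sj C) C ≤
      2 * ε * (Sj.map fun q => dist q xstar).sum :=
  stmt_17_general Sj xstar C ε hε0 hε1
end
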